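/- arXiv:2411.17246 — 3 statements merged into one kernel-verified Lean document; each statement's English description precedes it below -/
import Mathlib

section
/- Let G be a unimodular locally compact group, H a closed normal subgroup, A, B ⊆ G compact, and let (S_t)_{t≥0} be a nonincreasing family of σ-compact subsets of G/H such that S_t ⊆ {gH : μ_H(g⁻¹B ∩ H) ≥ t} for all t. Then μ_G(A·B) ≥ ∫_{t≥0} μ_{G/H}(π(A)·S_t) dt. -/
open MeasureTheory Pointwise NNReal ENNReal

set_option linter.unusedSectionVars false
set_option maxHeartbeats 1000000

open MeasureTheory Pointwise NNReal ENNReal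

namespace SpilloverAux

variable {G : Type*} [Group G] [TopologicalSpace G] [IsTopologicalGroup G]
    [LocallyCompactSpace G] [MeasurableSpace G] [BorelSpace G]
    {H : Subgroup G} [H.Normal]

instance : BorelSpace H := Subtype.borelSpace (H : Set G)

/-- Fiber integral of `f` at `x`, as a function of the representative. -/
noncomputable def Qf (μH : Measure H) (f : G → ℝ) (x : G) : ℝ :=
    ∫ h : H, f (x⁻¹ * (h : G)) ∂μH

/-- Fiber integral of `f`, as a function on the quotient (over the coset `q⁻¹`). -/
noncomputable def Pf (μH : Measure H) (f : G → ℝ) (q : G ⧸ H) : ℝ :=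
    Qf μH f (Quotient.out q)

lemma Qf_mul_mem (μH : Measure H) [μH.IsMulLeftInvariant] (f : G → ℝ) (x : G) {k : G}
    (hk : k ∈ H) : Qf μH f (x * k) = Qf μH f x := by
  have hk' : x * k⁻¹ * x⁻¹ ∈ H := Subgroup.Normal.conj_mem ‹H.Normal› _ (H.inv_mem hk) x
  have : ∀ h : H, f ((x * k)⁻¹ * (h : G)) = f (x⁻¹ * ((⟨_, hk'⟩ * h : H) : G)) := by
    intro h
    congr 1
    push_cast
    group
  calc Qf μH f (x * k) = ∫ h : H, f (x⁻¹ * ((⟨_, hk'⟩ * h : H) : G)) ∂μH := by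
        unfold Qf; exact integral_congr_ae (Filter.Eventually.of_forall this)
    _ = Qf μH f x := integral_mul_left_eq_self (fun h : H => f (x⁻¹ * (h : G))) _

lemma Qf_eq_of_mk_eq (μH : Measure H) [μH.IsMulLeftInvariant] (f : G → ℝ) {x y : G}
    (hxy : (x : G ⧸ H) = y) : Qf μH f x = Qf μH f y := by
  have hk : x⁻¹ * y ∈ H := (QuotientGroup.eq).1 hxy
  have : y = x * (x⁻¹ * y) := by group
  rw [this, Qf_mul_mem μH f x hk]

lemma Pf_mk (μH : Measure H) [μH.IsMulLeftInvariant] (f : G → ℝ) (x : G) :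
    Pf μH f (QuotientGroup.mk x) = Qf μH f x := by
  apply Qf_eq_of_mk_eq
  exact QuotientGroup.out_eq' _


lemma continuous_Qf (hH : IsClosed (H : Set G)) (μH : Measure H) [IsFiniteMeasureOnCompacts μH]
    {f : G → ℝ} (hf : Continuous f) (h'f : HasCompactSupport f) :
    Continuous (Qf μH f) := by
  rw [continuous_iff_continuousAt]
  intro x₀
  obtain ⟨t, t_comp, ht⟩ := exists_compact_mem_nhds x₀
  have k_comp : IsCompact ((Subtype.val : H → G) ⁻¹' (t * tsupport f)) :=
    hH.isClosedEmbedding_subtypeVal.isCompact_preimage (t_comp.mul h'f)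
  have A : ContinuousOn (fun x : G => ∫ h : H, f (x⁻¹ * (h : G)) ∂μH) t := by
    apply continuousOn_integral_of_compact_support k_comp
    · exact (hf.comp ((continuous_fst.inv).mul
        (continuous_subtype_val.comp continuous_snd))).continuousOn
    · intro p h hp hx
      by_contra hne
      apply hx
      have : p⁻¹ * (h : G) ∈ tsupport f := subset_tsupport _ hne
      have : (h : G) ∈ t * tsupport f := ⟨p, hp, _, this, by group⟩
      exact this
  exact A.continuousAt ht

lemma hasCompactSupport_fiber (hH : IsClosed (H : Set G)) {f : G → ℝ}
    (h'f : HasCompactSupport f) (x : G) :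
    HasCompactSupport (fun h : H => f (x⁻¹ * (h : G))) := by
  apply HasCompactSupport.intro'
    (hH.isClosedEmbedding_subtypeVal.isCompact_preimage
      (isCompact_singleton.mul h'f : IsCompact ({x} * tsupport f)))
    (IsClosed.preimage continuous_subtype_val
      (by simpa [Set.singleton_mul] using
        (Homeomorph.mulLeft x).isClosedMap _ (isClosed_tsupport f)))
  · intro h hx
    by_contra hne
    apply hx
    have h1 : x⁻¹ * (h : G) ∈ tsupport f := subset_tsupport _ hne
    exact ⟨x, rfl, _, h1, by group⟩

lemma integrable_fiber (hH : IsClosed (H : Set G)) (μH : Measure H)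
    [IsFiniteMeasureOnCompacts μH] {f : G → ℝ} (hf : Continuous f)
    (h'f : HasCompactSupport f) (x : G) :
    Integrable (fun h : H => f (x⁻¹ * (h : G))) μH := by
  exact (hf.comp (continuous_const.mul continuous_subtype_val)).integrable_of_hasCompactSupport
    (hasCompactSupport_fiber hH h'f x)


lemma continuous_Pf (hH : IsClosed (H : Set G)) (μH : Measure H) [μH.IsMulLeftInvariant]
    [IsFiniteMeasureOnCompacts μH] {f : G → ℝ} (hf : Continuous f)
    (h'f : HasCompactSupport f) : Continuous (Pf μH f) := by
  have hcomp : Pf μH f ∘ QuotientGroup.mk = Qf μH f := funext fun x => Pf_mk μH f x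
  rw [(QuotientGroup.isQuotientMap_mk H).continuous_iff]
  rw [hcomp]
  exact continuous_Qf hH μH hf h'f

lemma hasCompactSupport_Pf (hH : IsClosed (H : Set G)) (μH : Measure H)
    {f : G → ℝ} (h'f : HasCompactSupport f) : HasCompactSupport (Pf μH f) := by
  haveI := hH
  apply HasCompactSupport.intro
    (K := ((QuotientGroup.mk '' tsupport f : Set (G ⧸ H)))⁻¹)
    ((h'f.image (QuotientGroup.isQuotientMap_mk H).continuous).inv)
  intro q hq
  have hz : ∀ h : H, f ((Quotient.out q)⁻¹ * (h : G)) = 0 := by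
    intro h
    by_contra hne
    apply hq
    have h1 : (Quotient.out q)⁻¹ * (h : G) ∈ tsupport f := subset_tsupport _ hne
    have h2 : (QuotientGroup.mk ((Quotient.out q)⁻¹ * (h : G)) : G ⧸ H) = q⁻¹ := by
      rw [QuotientGroup.mk_mul]
      have e1 : (QuotientGroup.mk ((h : G)) : G ⧸ H) = 1 :=
        (QuotientGroup.eq_one_iff _).2 h.2
      have e2 : (QuotientGroup.mk ((Quotient.out q)⁻¹) : G ⧸ H) = q⁻¹ := by
        rw [QuotientGroup.mk_inv, QuotientGroup.out_eq']
      rw [e1, e2, mul_one]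
    rw [Set.mem_inv]
    exact ⟨_, h1, h2⟩
  unfold Pf Qf
  simp only [hz, integral_zero]


section Unimod

variable [MeasurableSpace (G ⧸ H)] [BorelSpace (G ⧸ H)]

/-- Translation identity: the Weil formula implies that integrals of fiber-integral functions
are invariant under right translation on the quotient. -/
lemma integral_Pf_translate (μG : Measure G) [μG.IsMulLeftInvariant]
    (μH : Measure H) [μH.IsMulLeftInvariant]
    (μGH : Measure (G ⧸ H))
    (hweil : ∀ f : G → ℝ, Continuous f → HasCompactSupport f →
      ∫ x, f x ∂μG =
        ∫ q : G ⧸ H, (∫ h : H, f ((Quotient.out q)⁻¹ * (h : G)) ∂μH) ∂μGH)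
    {f : G → ℝ} (hf : Continuous f) (h'f : HasCompactSupport f) (c : G) :
    ∫ q, Pf μH f (q * QuotientGroup.mk c) ∂μGH = ∫ x, f x ∂μG := by
  have hf' : Continuous (fun x => f (c⁻¹ * x)) := hf.comp (continuous_const.mul continuous_id)
  have h'f' : HasCompactSupport fun x => f (c⁻¹ * x) :=
    h'f.comp_homeomorph (Homeomorph.mulLeft c⁻¹)
  have e1 : ∀ q : G ⧸ H, Pf μH f (q * QuotientGroup.mk c) = Pf μH (fun x => f (c⁻¹ * x)) q := by
    intro q
    have h2 : Qf μH (fun x => f (c⁻¹ * x)) (Quotient.out q) = Qf μH f (Quotient.out q * c) := by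
      unfold Qf
      refine integral_congr_ae (Filter.Eventually.of_forall fun h => ?_)
      congr 1
      group
    have h3 : (QuotientGroup.mk (Quotient.out q * c) : G ⧸ H) = q * QuotientGroup.mk c := by
      rw [QuotientGroup.mk_mul, QuotientGroup.out_eq']
    calc Pf μH f (q * QuotientGroup.mk c)
        = Qf μH f (Quotient.out q * c) := by rw [← h3, Pf_mk]
      _ = Qf μH (fun x => f (c⁻¹ * x)) (Quotient.out q) := h2.symm
      _ = Pf μH (fun x => f (c⁻¹ * x)) q := rfl
  rw [integral_congr_ae (Filter.Eventually.of_forall e1)]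
  have h4 := hweil (fun x => f (c⁻¹ * x)) hf' h'f'
  have h5 : ∫ q, Pf μH (fun x => f (c⁻¹ * x)) q ∂μGH = ∫ x, f (c⁻¹ * x) ∂μG := by
    rw [h4]
    unfold Pf Qf
    rfl
  rw [h5]
  exact integral_mul_left_eq_self f c⁻¹

/-- From the Weil formula, the quotient Haar measure is inversion-invariant on σ-compact sets. -/
lemma unimod (μG : Measure G) [μG.IsHaarMeasure]
    (hH : IsClosed (H : Set G)) (μH : Measure H) [μH.IsHaarMeasure]
    (μGH : Measure (G ⧸ H)) [μGH.IsHaarMeasure]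
    (hweil : ∀ f : G → ℝ, Continuous f → HasCompactSupport f →
      ∫ x, f x ∂μG =
        ∫ q : G ⧸ H, (∫ h : H, f ((Quotient.out q)⁻¹ * (h : G)) ∂μH) ∂μGH)
    {W : Set (G ⧸ H)} (hW : IsSigmaCompact W) : μGH W⁻¹ = μGH W := by
  haveI := hH
  -- the reference Haar measure on the quotient
  set 𝔥 : Measure (G ⧸ H) := Measure.haar with h𝔥
  -- a positive test function on G
  obtain ⟨V, V_comp, hV1⟩ := exists_compact_mem_nhds (1 : G)
  obtain ⟨f₀, hf₀1, -, h'f₀, hf₀range⟩ :=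
    exists_continuous_one_zero_of_isCompact V_comp isClosed_empty (Set.disjoint_empty V)
  have hf₀cont : Continuous (f₀ : G → ℝ) := f₀.continuous
  have hf₀nonneg : ∀ x, 0 ≤ f₀ x := fun x => (hf₀range x).1
  have hpos : 0 < ∫ x, f₀ x ∂μG := by
    have h1 : μG (interior V) ≤ ENNReal.ofReal (∫ x, f₀ x ∂μG) := by
      apply (hf₀cont.integrable_of_hasCompactSupport h'f₀).measure_le_integral
      · exact Filter.Eventually.of_forall hf₀nonneg
      · intro x hx
        simp [hf₀1 (interior_subset hx)]
    have h2 : 0 < μG (interior V) :=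
      IsOpen.measure_pos μG isOpen_interior ⟨1, mem_interior_iff_mem_nhds.2 hV1⟩
    have := lt_of_lt_of_le h2 h1
    rcases lt_or_ge 0 (∫ x, f₀ x ∂μG) with h | h
    · exact h
    · rw [ENNReal.ofReal_eq_zero.2 h] at this; exact absurd this (lt_irrefl 0)
  -- the fiber-integral test function on the quotient
  set P₀ : (G ⧸ H) → ℝ := Pf μH (f₀ : G → ℝ) with hP₀
  have contP : Continuous P₀ := continuous_Pf hH μH hf₀cont h'f₀
  have suppP : HasCompactSupport P₀ := hasCompactSupport_Pf hH μH h'f₀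
  have base : ∫ q, P₀ q ∂μGH = ∫ x, f₀ x ∂μG := by
    have := integral_Pf_translate μG μH μGH hweil hf₀cont h'f₀ 1
    simpa using this
  -- scalar factor between μGH and 𝔥
  set κ : ℝ≥0 := Measure.haarScalarFactor μGH 𝔥 with hκ
  have κpos : 0 < κ := Measure.haarScalarFactor_pos_of_isHaarMeasure μGH 𝔥
  have transfer : ∀ φ : (G ⧸ H) → ℝ, Continuous φ → HasCompactSupport φ →
      ∫ q, φ q ∂μGH = (κ : ℝ) * ∫ q, φ q ∂𝔥 := by
    intro φ hφ h'φ
    rw [Measure.integral_isMulLeftInvariant_eq_smul_of_hasCompactSupport μGH 𝔥 hφ h'φ,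
      integral_smul_nnreal_measure]
    rfl
  have hκR : (0:ℝ) < (κ:ℝ) := by exact_mod_cast κpos
  have h𝔥pos : 0 < ∫ q, P₀ q ∂𝔥 := by
    have heq := transfer P₀ contP suppP
    rw [base] at heq
    by_contra hle
    push_neg at hle
    nlinarith
  -- right-translation invariance of 𝔥 (as measures)
  have rinv : ∀ c : G ⧸ H, Measure.map (· * c) 𝔥 = 𝔥 := by
    intro c
    obtain ⟨c₀, rfl⟩ := QuotientGroup.mk_surjective c
    set ν : Measure (G ⧸ H) := Measure.map (· * (QuotientGroup.mk c₀ : G ⧸ H)) 𝔥 with hν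
    haveI hν_fin : IsFiniteMeasureOnCompacts ν := by
      constructor
      intro K hK
      rw [hν, Measure.map_apply (measurable_mul_const _) hK.measurableSet]
      exact (((Homeomorph.mulRight ((QuotientGroup.mk c₀ : G ⧸ H))).isCompact_preimage).2
        hK).measure_lt_top
    haveI hν_li : ν.IsMulLeftInvariant := by
      constructor
      intro a
      rw [hν, Measure.map_map (measurable_const_mul a) (measurable_mul_const _)]
      have : ((a * ·) ∘ (· * (QuotientGroup.mk c₀ : G ⧸ H)))
          = ((· * (QuotientGroup.mk c₀ : G ⧸ H)) ∘ (a * ·)) := by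
        funext x; simp [mul_assoc]
      rw [this, ← Measure.map_map (measurable_mul_const _) (measurable_const_mul a),
        map_mul_left_eq_self]
    haveI hν_reg : ν.Regular := by
      have : ν = Measure.map (Homeomorph.mulRight ((QuotientGroup.mk c₀ : G ⧸ H))) 𝔥 := rfl
      rw [this]
      exact Measure.Regular.map (Homeomorph.mulRight _)
    have hmap : ∫ q, P₀ q ∂ν = ∫ q, P₀ (q * (QuotientGroup.mk c₀ : G ⧸ H)) ∂𝔥 :=
      integral_map (measurable_mul_const _).aemeasurable contP.aestronglyMeasurable
    have htrans : ∫ q, P₀ (q * (QuotientGroup.mk c₀ : G ⧸ H)) ∂𝔥 = ∫ q, P₀ q ∂𝔥 := by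
      have cont2 : Continuous fun q : G ⧸ H => P₀ (q * (QuotientGroup.mk c₀ : G ⧸ H)) :=
        contP.comp (continuous_mul_right _)
      have supp2 : HasCompactSupport fun q : G ⧸ H => P₀ (q * (QuotientGroup.mk c₀ : G ⧸ H)) :=
        suppP.comp_homeomorph (Homeomorph.mulRight _)
      have e1 := transfer _ cont2 supp2
      have e2 := transfer P₀ contP suppP
      have e3 := integral_Pf_translate μG μH μGH hweil hf₀cont h'f₀ c₀
      have e4 : ∫ q, P₀ (q * (QuotientGroup.mk c₀ : G ⧸ H)) ∂μGH = ∫ q, P₀ q ∂μGH := by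
        rw [e3, base]
      rw [e1, e2] at e4
      have hκne : (κ : ℝ) ≠ 0 := by positivity
      field_simp at e4
      linarith
    have hfac : Measure.haarScalarFactor ν 𝔥 = 1 := by
      have := Measure.haarScalarFactor_eq_integral_div ν 𝔥 contP suppP (ne_of_gt h𝔥pos)
      rw [hmap, htrans, div_self (ne_of_gt h𝔥pos)] at this
      exact_mod_cast this
    have := Measure.isMulLeftInvariant_eq_smul_of_regular ν 𝔥
    rw [hfac, one_smul] at this
    exact this
  haveI hrinv : 𝔥.IsMulRightInvariant := ⟨rinv⟩
  -- inversion invariance of 𝔥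
  haveI hinv_fin : IsFiniteMeasureOnCompacts 𝔥.inv := by
    constructor
    intro K hK
    rw [Measure.inv_apply]
    exact hK.inv.measure_lt_top
  haveI hinv_reg : 𝔥.inv.Regular := by
    have : 𝔥.inv = Measure.map (Homeomorph.inv (G ⧸ H)) 𝔥 := rfl
    rw [this]
    exact Measure.Regular.map (Homeomorph.inv _)
  let c' : ℝ≥0∞ := Measure.haarScalarFactor 𝔥.inv 𝔥
  have hc : 𝔥.inv = c' • 𝔥 := Measure.isMulLeftInvariant_eq_smul_of_regular 𝔥.inv 𝔥
  have hmapmap : Measure.map Inv.inv (Measure.map Inv.inv 𝔥) = c' ^ 2 • 𝔥 := by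
    rw [← Measure.inv_def 𝔥, hc, Measure.map_smul, ← Measure.inv_def 𝔥, hc, smul_smul, pow_two]
  have μeq : 𝔥 = c' ^ 2 • 𝔥 := by
    rw [Measure.map_map continuous_inv.measurable continuous_inv.measurable] at hmapmap
    simpa only [inv_involutive, Function.Involutive.comp_self, Measure.map_id] using hmapmap
  have K : TopologicalSpace.PositiveCompacts (G ⧸ H) := Classical.arbitrary _
  have hKeq : c' ^ 2 * 𝔥 K = 1 ^ 2 * 𝔥 K := by
    conv_rhs => rw [μeq]
    simp
  have hc2 : c' ^ 2 = 1 ^ 2 :=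
    (ENNReal.mul_left_inj
      (Measure.measure_pos_of_nonempty_interior _ K.interior_nonempty).ne'
      K.isCompact.measure_lt_top.ne).1 hKeq
  have hc1 : c' = 1 := (ENNReal.pow_right_strictMono two_ne_zero).injective hc2
  have hinveq : 𝔥.inv = 𝔥 := by
    rw [hc, hc1, one_smul]
  have hinv𝔥 : ∀ s : Set (G ⧸ H), 𝔥 s⁻¹ = 𝔥 s := by
    intro s
    rw [← Measure.inv_apply, hinveq]
  -- transfer to μGH on σ-compact sets
  obtain ⟨Kseq, hKc, hKU⟩ := hW
  set L : ℕ → Set (G ⧸ H) := fun n => Set.accumulate Kseq n with hL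
  have hLc : ∀ n, IsCompact (L n) := by
    intro n
    have hdef : L n = ⋃ y ≤ n, Kseq y := Set.accumulate_def
    rw [hdef]
    exact (Set.finite_Iic n).isCompact_biUnion fun i _ => hKc i
  have hLmono : Monotone L := Set.monotone_accumulate
  have acc_eq : ∀ (g : ℕ → Set (G ⧸ H)), Monotone g → ∀ n, Set.accumulate g n = g n := by
    intro g hg n
    apply subset_antisymm
    · exact Set.iUnion₂_subset fun i hi => hg hi
    · exact Set.subset_accumulate
  have hWU : W = ⋃ n, L n := by rw [hL, Set.iUnion_accumulate, hKU]
  have agree : ∀ s : Set (G ⧸ H), IsCompact s → μGH s = κ • 𝔥 s := by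
    intro s hs
    exact Measure.measure_isMulInvariant_eq_smul_of_isCompact_closure μGH 𝔥 hs.closure
  have hWinv : W⁻¹ = ⋃ n, (L n)⁻¹ := by rw [hWU, Set.iUnion_inv]
  have mono_inv : Monotone fun n => (L n)⁻¹ := fun a b hab => Set.inv_subset_inv.2 (hLmono hab)
  calc μGH W⁻¹ = ⨆ n, μGH (Set.accumulate (fun n => (L n)⁻¹) n) := by
        rw [hWinv]; exact measure_iUnion_eq_iSup_accumulate
    _ = ⨆ n, μGH ((L n)⁻¹) := by
        refine iSup_congr fun n => ?_
        rw [acc_eq _ mono_inv n]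
    _ = ⨆ n, κ • 𝔥 ((L n)⁻¹) := iSup_congr fun n => agree _ (hLc n).inv
    _ = ⨆ n, κ • 𝔥 (L n) := by
        refine iSup_congr fun n => ?_
        rw [hinv𝔥]
    _ = ⨆ n, μGH (L n) := iSup_congr fun n => (agree _ (hLc n)).symm
    _ = ⨆ n, μGH (Set.accumulate L n) := by
        refine iSup_congr fun n => ?_
        rw [acc_eq _ hLmono n]
    _ = μGH W := by rw [hWU]; exact measure_iUnion_eq_iSup_accumulate.symm

end Unimod

end SpilloverAux

/-- Spillover inequality: if `A, B ⊆ G` are compact and `(S_t)_{t ≥ 0}` is a nonincreasing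
family of σ-compact subsets of `G/H` with each `S_t` contained in the `t`-superlevel set of the
fiber length function of `B`, then `μ_G(A·B) ≥ ∫_{t ≥ 0} μ_{G/H}(π(A)·S_t) dt`. -/
theorem spillover_inequality
    {G : Type*} [Group G] [TopologicalSpace G] [IsTopologicalGroup G]
    [LocallyCompactSpace G] [MeasurableSpace G] [BorelSpace G]
    (μG : Measure G) [μG.IsHaarMeasure] [μG.IsMulRightInvariant]
    (H : Subgroup G) [H.Normal] (hH : IsClosed (H : Set G))
    (μH : Measure H) [μH.IsHaarMeasure]
    [MeasurableSpace (G ⧸ H)] [BorelSpace (G ⧸ H)]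
    (μGH : Measure (G ⧸ H)) [μGH.IsHaarMeasure]
    -- Weil's quotient integral formula, pinning down the normalization of the Haar measures
    (hweil : ∀ f : G → ℝ, Continuous f → HasCompactSupport f →
      ∫ x, f x ∂μG =
        ∫ q : G ⧸ H, (∫ h : H, f ((Quotient.out q)⁻¹ * (h : G)) ∂μH) ∂μGH)
    (A B : Set G) (hA : IsCompact A) (hB : IsCompact B)
    (S : ℝ → Set (G ⧸ H))
    (hSσ : ∀ t, IsSigmaCompact (S t))
    (hSmono : ∀ s t : ℝ, 0 ≤ s → s ≤ t → S t ⊆ S s)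
    (hSsub : ∀ t : ℝ, 0 ≤ t → ∀ x ∈ S t, ∃ g : G, QuotientGroup.mk g = x ∧
      ENNReal.ofReal t ≤ μH {h : H | g * (h : G) ∈ B}) :
    ∫⁻ t in Set.Ici (0 : ℝ), μGH ((QuotientGroup.mk '' A : Set (G ⧸ H)) * S t) ≤
      μG (A * B) := by
  classical
  haveI := hH
  have hC : IsCompact (A * B) := hA.mul hB
  set W : ℝ → Set (G ⧸ H) := fun t => (QuotientGroup.mk '' A : Set (G ⧸ H)) * S t with hW
  have hπA : IsCompact (QuotientGroup.mk '' A : Set (G ⧸ H)) :=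
    hA.image (QuotientGroup.isQuotientMap_mk H).continuous
  have hWσ : ∀ t, IsSigmaCompact (W t) := by
    intro t
    obtain ⟨Kn, hKn, hU⟩ := hSσ t
    exact ⟨fun n => (QuotientGroup.mk '' A : Set (G ⧸ H)) * Kn n,
      fun n => hπA.mul (hKn n), by rw [← Set.mul_iUnion, hU]⟩
  have sigma_meas : ∀ s : Set (G ⧸ H), IsSigmaCompact s → MeasurableSet s := by
    intro s hs
    obtain ⟨Kn, hKn, rfl⟩ := hs
    exact MeasurableSet.iUnion fun n => (hKn n).isClosed.measurableSet
  have hWmono : ∀ s t : ℝ, 0 ≤ s → s ≤ t → W t ⊆ W s := fun s t hs hst =>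
    Set.mul_subset_mul_left (hSmono s t hs hst)
  -- fiber length function of A*B
  set F : (G ⧸ H) → ℝ≥0∞ :=
    fun q => μH {h : H | (Quotient.out q)⁻¹ * (h : G) ∈ A * B} with hF
  -- Step 2: superlevel inclusion
  have step2 : ∀ t : ℝ, 0 ≤ t → ∀ q : G ⧸ H, q ∈ (W t)⁻¹ → ENNReal.ofReal t ≤ F q := by
    intro t ht q hq
    rw [Set.mem_inv] at hq
    obtain ⟨pa, hpa, s, hsS, hq'⟩ := hq
    obtain ⟨a, haA, rfl⟩ := hpa
    obtain ⟨g, hg, hgB⟩ := hSsub t ht s hsS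
    have hag : (QuotientGroup.mk (a * g) : G ⧸ H) = q⁻¹ := by
      rw [QuotientGroup.mk_mul, hg]
      exact hq'
    have hk : (a * g)⁻¹ * (Quotient.out q)⁻¹ ∈ H := by
      rw [← QuotientGroup.eq, hag]
      rw [QuotientGroup.mk_inv, QuotientGroup.out_eq']
    set k : H := ⟨(a * g)⁻¹ * (Quotient.out q)⁻¹, hk⟩ with hkdef
    have hsub : (fun h : H => k * h) ⁻¹' {h : H | g * (h : G) ∈ B}
        ⊆ {h : H | (Quotient.out q)⁻¹ * (h : G) ∈ A * B} := by
      intro h hh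
      simp only [Set.mem_preimage, Set.mem_setOf_eq] at hh ⊢
      have hcast : ((k * h : H) : G) = ((a * g)⁻¹ * (Quotient.out q)⁻¹) * (h : G) := rfl
      rw [hcast] at hh
      have hrw : (Quotient.out q)⁻¹ * (h : G)
          = a * (g * (((a * g)⁻¹ * (Quotient.out q)⁻¹) * (h : G))) := by group
      rw [hrw]
      exact Set.mul_mem_mul haA hh
    calc ENNReal.ofReal t ≤ μH {h : H | g * (h : G) ∈ B} := hgB
      _ = μH ((fun h : H => k * h) ⁻¹' {h : H | g * (h : G) ∈ B}) :=
          (measure_preimage_mul μH k _).symm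
      _ ≤ F q := measure_mono hsub
  -- the σ-compact carrier
  set K : Set (G ⧸ H) := (W 0)⁻¹ with hKdef
  have hKmeas : MeasurableSet K := (sigma_meas _ (hWσ 0)).inv
  set μ' : Measure (G ⧸ H) := μGH.restrict K with hμ'
  haveI hμ'σ : SigmaFinite μ' := by
    obtain ⟨K0n, hK0n, hU0⟩ := hWσ 0
    refine ⟨⟨⟨fun n => (K0n n)⁻¹ ∪ Kᶜ, fun _ => trivial, fun n => ?_, ?_⟩⟩⟩
    · have h1 : μ' ((K0n n)⁻¹ ∪ Kᶜ) ≤ μ' ((K0n n)⁻¹) + μ' Kᶜ := measure_union_le _ _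
      have h2 : μ' ((K0n n)⁻¹) ≤ μGH ((K0n n)⁻¹) := Measure.restrict_apply_le _ _
      have h3 : μ' Kᶜ = 0 := by
        rw [hμ', Measure.restrict_apply (hKmeas.compl)]
        simp
      have h4 : μGH ((K0n n)⁻¹) < ∞ := (hK0n n).inv.measure_lt_top
      calc μ' ((K0n n)⁻¹ ∪ Kᶜ) ≤ μ' ((K0n n)⁻¹) + μ' Kᶜ := h1
        _ ≤ μGH ((K0n n)⁻¹) + 0 := add_le_add h2 (le_of_eq h3)
        _ < ∞ := by simpa using h4
    · apply Set.eq_univ_of_forall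
      intro q
      by_cases hq : q ∈ K
      · rw [hKdef] at hq
        rw [Set.mem_inv] at hq
        rw [← hU0] at hq
        obtain ⟨i, hi⟩ := Set.mem_iUnion.1 hq
        exact Set.mem_iUnion.2 ⟨i, Or.inl (Set.mem_inv.2 hi)⟩
      · exact Set.mem_iUnion.2 ⟨0, Or.inr hq⟩
  -- the Tonelli majorant set
  set U : Set (ℝ × (G ⧸ H)) := (Set.Ici (0:ℝ) ×ˢ Set.univ) ∩
      ⋂ (s : ℚ), {p : ℝ × (G ⧸ H) | 0 ≤ (s:ℝ) ∧ (s:ℝ) < p.1 → p.2 ∈ (W (s:ℝ))⁻¹} with hU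
  have hUmeas : MeasurableSet U := by
    apply (measurableSet_Ici.prod MeasurableSet.univ).inter
    apply MeasurableSet.iInter
    intro s
    by_cases hs : 0 ≤ (s:ℝ)
    · have : {p : ℝ × (G ⧸ H) | 0 ≤ (s:ℝ) ∧ (s:ℝ) < p.1 → p.2 ∈ (W (s:ℝ))⁻¹}
          = (Set.Iic (s:ℝ) ×ˢ (Set.univ : Set (G ⧸ H))) ∪
            ((Set.univ : Set ℝ) ×ˢ (W (s:ℝ))⁻¹) := by
        ext p
        simp only [Set.mem_setOf_eq, Set.mem_union, Set.mem_prod, Set.mem_univ, and_true,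
          true_and, Set.mem_Iic]
        constructor
        · intro hp
          rcases le_or_gt p.1 (s:ℝ) with h | h
          · exact Or.inl h
          · exact Or.inr (hp ⟨hs, h⟩)
        · rintro (h | h) ⟨_, h2⟩
          · exact absurd h2 (not_lt.2 h)
          · exact h
      rw [this]
      exact (measurableSet_Iic.prod MeasurableSet.univ).union
        (MeasurableSet.univ.prod ((sigma_meas _ (hWσ _)).inv))
    · have : {p : ℝ × (G ⧸ H) | 0 ≤ (s:ℝ) ∧ (s:ℝ) < p.1 → p.2 ∈ (W (s:ℝ))⁻¹} = Set.univ := by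
        apply Set.eq_univ_of_forall
        intro p hp
        exact absurd hp.1 hs
      rw [this]
      exact MeasurableSet.univ
  -- inclusion of inverse sets into sections of U
  have htles : ∀ t : ℝ, 0 ≤ t → (W t)⁻¹ ⊆ {q | (t, q) ∈ U} := by
    intro t ht q hq
    refine ⟨⟨ht, trivial⟩, ?_⟩
    rw [Set.mem_iInter]
    intro s
    intro hst
    have : W t ⊆ W (s:ℝ) := hWmono _ _ hst.1 hst.2.le
    exact Set.inv_subset_inv.2 this hq
  -- fibers of U have measure at most F q
  have hfiber : ∀ q : G ⧸ H, (∫⁻ t in Set.Ici (0:ℝ), U.indicator 1 (t, q)) ≤ F q := by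
    intro q
    have hsec : MeasurableSet {t : ℝ | (t, q) ∈ U} :=
      (measurable_id.prodMk measurable_const) hUmeas
    have heq : ∀ t : ℝ, U.indicator 1 (t, q)
        = Set.indicator {t : ℝ | (t, q) ∈ U} (fun _ => (1:ℝ≥0∞)) t := by
      intro t
      by_cases ht : (t, q) ∈ U <;> simp [Set.indicator_apply, ht]
    rw [lintegral_congr heq]
    rw [lintegral_indicator hsec, Measure.restrict_restrict hsec, setLIntegral_one]
    have hkey : ∀ t : ℝ, (t, q) ∈ U → ENNReal.ofReal t ≤ F q := by
      intro t htU
      obtain ⟨⟨ht0, -⟩, hInter⟩ := htU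
      rw [Set.mem_iInter] at hInter
      by_contra hcon
      push_neg at hcon
      have hFfin : F q ≠ ∞ := ne_top_of_lt hcon
      have htp : (F q).toReal < t := by
        rw [← ENNReal.lt_ofReal_iff_toReal_lt hFfin]
        exact hcon
      have hmax : max 0 (F q).toReal < t := max_lt (lt_of_le_of_ne ht0 ?hne) htp
      case hne =>
        intro h0
        rw [← h0] at hcon
        simp at hcon
      obtain ⟨r, hr1, hr2⟩ := exists_rat_btwn hmax
      have hr0 : 0 ≤ (r:ℝ) := le_of_lt (lt_of_le_of_lt (le_max_left _ _) hr1)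
      have hq' : q ∈ (W (r:ℝ))⁻¹ := hInter r ⟨hr0, hr2⟩
      have := step2 (r:ℝ) hr0 q hq'
      have : (r:ℝ) ≤ (F q).toReal := by
        rw [← ENNReal.ofReal_le_iff_le_toReal hFfin]
        exact this
      exact absurd this (not_le.2 (lt_of_le_of_lt (le_max_right _ _) hr1))
    rcases eq_or_ne (F q) ∞ with hfq | hfq
    · rw [hfq]; exact le_top
    · have hsub2 : {t : ℝ | (t, q) ∈ U} ∩ Set.Ici 0 ⊆ Set.Icc 0 (F q).toReal := by
        intro t ⟨ht1, ht2⟩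
        refine ⟨ht2, ?_⟩
        rw [← ENNReal.ofReal_le_iff_le_toReal hfq]
        exact hkey t ht1
      calc volume ({t : ℝ | (t, q) ∈ U} ∩ Set.Ici 0) ≤ volume (Set.Icc 0 (F q).toReal) :=
            measure_mono hsub2
        _ = ENNReal.ofReal ((F q).toReal - 0) := by rw [Real.volume_Icc]
        _ = F q := by rw [sub_zero, ENNReal.ofReal_toReal hfq]
  -- Part B : the fiber integral is at most μG (A * B)
  have partB : ∫⁻ q, F q ∂μ' ≤ μG (A * B) := by
    set 𝔤 : Measure G := Measure.haar with h𝔤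
    set κG : ℝ≥0 := Measure.haarScalarFactor μG 𝔤 with hκG
    have hμGC : μG (A * B) = κG • 𝔤 (A * B) :=
      Measure.measure_isMulInvariant_eq_smul_of_isCompact_closure μG 𝔤 hC.closure
    have hbiInf := hC.measure_eq_biInf_integral_hasCompactSupport 𝔤
    have hf_bound : ∀ f : G → ℝ, Continuous f → HasCompactSupport f →
        Set.EqOn f 1 (A * B) → 0 ≤ f →
        ∫⁻ q, F q ∂μ' ≤ ENNReal.ofReal (∫ x, f x ∂μG) := by
      intro f hfc hfs hf1 hf0
      have hFle : ∀ q : G ⧸ H, F q ≤ ENNReal.ofReal (SpilloverAux.Pf μH f q) := by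
        intro q
        have hmeas : Measurable fun h : H =>
            ENNReal.ofReal (f ((Quotient.out q)⁻¹ * (h : G))) :=
          ENNReal.measurable_ofReal.comp
            ((hfc.comp (continuous_const.mul continuous_subtype_val)).measurable)
        have hsub : {h : H | (Quotient.out q)⁻¹ * (h : G) ∈ A * B}
            ⊆ {h : H | 1 ≤ ENNReal.ofReal (f ((Quotient.out q)⁻¹ * (h : G)))} := by
          intro h hh
          simp only [Set.mem_setOf_eq] at hh ⊢
          rw [hf1 hh]
          simp
        have hcheb := mul_meas_ge_le_lintegral₀ (μ := μH) hmeas.aemeasurable 1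
        rw [one_mul] at hcheb
        have h2 : F q ≤ ∫⁻ h : H, ENNReal.ofReal (f ((Quotient.out q)⁻¹ * (h : G))) ∂μH :=
          le_trans (measure_mono hsub) hcheb
        have h3 : ∫⁻ h : H, ENNReal.ofReal (f ((Quotient.out q)⁻¹ * (h : G))) ∂μH
            = ENNReal.ofReal (SpilloverAux.Pf μH f q) := by
          rw [← MeasureTheory.ofReal_integral_eq_lintegral_ofReal
            (SpilloverAux.integrable_fiber hH μH hfc hfs (Quotient.out q))
            (Filter.Eventually.of_forall fun h => hf0 _)]
          rfl
        rw [← h3]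
        exact h2
      have hPcont : Continuous (SpilloverAux.Pf μH f) := SpilloverAux.continuous_Pf hH μH hfc hfs
      have hPsupp : HasCompactSupport (SpilloverAux.Pf μH f) :=
        SpilloverAux.hasCompactSupport_Pf hH μH hfs
      have hPnonneg : ∀ q, 0 ≤ SpilloverAux.Pf μH f q := by
        intro q
        exact integral_nonneg fun h => hf0 _
      calc ∫⁻ q, F q ∂μ' ≤ ∫⁻ q, ENNReal.ofReal (SpilloverAux.Pf μH f q) ∂μ' :=
            lintegral_mono hFle
        _ ≤ ∫⁻ q, ENNReal.ofReal (SpilloverAux.Pf μH f q) ∂μGH := by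
            rw [hμ']
            exact setLIntegral_le_lintegral _ _
        _ = ENNReal.ofReal (∫ q, SpilloverAux.Pf μH f q ∂μGH) := by
            rw [MeasureTheory.ofReal_integral_eq_lintegral_ofReal
              (hPcont.integrable_of_hasCompactSupport hPsupp)
              (Filter.Eventually.of_forall hPnonneg)]
        _ = ENNReal.ofReal (∫ x, f x ∂μG) := by
            rw [hweil f hfc hfs]
            rfl
    -- approximation
    have htrans : ∀ f : G → ℝ, Continuous f → HasCompactSupport f →
        ∫ x, f x ∂μG = (κG : ℝ) * ∫ x, f x ∂𝔤 := by
      intro f hfc hfs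
      rw [Measure.integral_isMulLeftInvariant_eq_smul_of_hasCompactSupport μG 𝔤 hfc hfs,
        integral_smul_nnreal_measure]
      rfl
    have main : ∀ r : ℝ≥0∞, 𝔤 (A * B) < r → ∫⁻ q, F q ∂μ' ≤ (κG : ℝ≥0∞) * r := by
      intro r hr
      rw [hbiInf] at hr
      simp only [iInf_lt_iff] at hr
      obtain ⟨f, hfc, hfs, hf1, hf0, hfr⟩ := hr
      calc ∫⁻ q, F q ∂μ' ≤ ENNReal.ofReal (∫ x, f x ∂μG) := hf_bound f hfc hfs hf1 hf0
        _ = (κG : ℝ≥0∞) * ENNReal.ofReal (∫ x, f x ∂𝔤) := by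
            rw [htrans f hfc hfs, ENNReal.ofReal_mul (by positivity), ENNReal.ofReal_coe_nnreal]
        _ ≤ (κG : ℝ≥0∞) * r := mul_le_mul_right hfr.le _
    have hfin : 𝔤 (A * B) ≠ ∞ := hC.measure_lt_top.ne
    rw [hμGC]
    have hsmul : κG • 𝔤 (A * B) = (κG : ℝ≥0∞) * 𝔤 (A * B) := rfl
    rw [hsmul]
    apply ENNReal.le_of_forall_pos_le_add
    intro ε hε hlt
    rcases eq_or_ne (κG : ℝ≥0∞) 0 with hκ0 | hκ0
    · have := main (𝔤 (A * B) + 1) (ENNReal.lt_add_right hfin one_ne_zero)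
      rw [hκ0, zero_mul] at this
      calc ∫⁻ q, F q ∂μ' ≤ 0 := this
        _ ≤ (κG : ℝ≥0∞) * 𝔤 (A * B) + ε := by positivity
    · have hκGne : κG ≠ 0 := ENNReal.coe_ne_zero.1 hκ0
      have hκpos : 0 < κG := pos_iff_ne_zero.2 hκGne
      set ε' : ℝ≥0 := ε / κG with hε'
      have hε'ne : ε' ≠ 0 := by
        rw [hε']
        exact (div_pos hε hκpos).ne'
      have hlt2 : 𝔤 (A * B) < 𝔤 (A * B) + (ε' : ℝ≥0∞) :=
        ENNReal.lt_add_right hfin (by exact_mod_cast hε'ne)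
      have hmain := main _ hlt2
      have hmul : (κG : ℝ≥0∞) * (𝔤 (A * B) + (ε' : ℝ≥0∞))
          = (κG : ℝ≥0∞) * 𝔤 (A * B) + (ε : ℝ≥0∞) := by
        rw [mul_add]
        congr 1
        rw [← ENNReal.coe_mul]
        congr 1
        rw [hε', mul_comm, div_mul_cancel₀ _ hκGne]
      rw [hmul] at hmain
      exact hmain
  -- assembling the chain
  have hres : ∀ t : ℝ, 0 ≤ t → μGH ((W t)⁻¹) ≤ μ' {q | (t, q) ∈ U} := by
    intro t ht
    have hsubK : (W t)⁻¹ ⊆ K := Set.inv_subset_inv.2 (hWmono 0 t le_rfl ht)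
    have heq : μGH ((W t)⁻¹) = μ' ((W t)⁻¹) := by
      rw [hμ', Measure.restrict_apply' hKmeas, Set.inter_eq_self_of_subset_left hsubK]
    rw [heq]
    exact measure_mono (htles t ht)
  calc ∫⁻ t in Set.Ici (0:ℝ), μGH (W t)
      = ∫⁻ t in Set.Ici (0:ℝ), μGH ((W t)⁻¹) := by
        refine setLIntegral_congr_fun measurableSet_Ici (fun t ht => ?_)
        exact (SpilloverAux.unimod μG hH μH μGH hweil (hWσ t)).symm
    _ ≤ ∫⁻ t in Set.Ici (0:ℝ), μ' {q | (t, q) ∈ U} := by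
        apply setLIntegral_mono_ae' measurableSet_Ici
        exact ae_of_all _ fun t ht => hres t ht
    _ = ∫⁻ t in Set.Ici (0:ℝ), ∫⁻ q, U.indicator 1 (t, q) ∂μ' := by
        refine setLIntegral_congr_fun measurableSet_Ici (fun t ht => ?_)
        have hsec : MeasurableSet {q : G ⧸ H | (t, q) ∈ U} :=
          measurable_prodMk_left hUmeas
        rw [← lintegral_indicator_one hsec]
        refine lintegral_congr fun q => ?_
        by_cases hq : (t, q) ∈ U <;> simp [Set.indicator_apply, hq]
    _ = ∫⁻ q, (∫⁻ t in Set.Ici (0:ℝ), U.indicator 1 (t, q)) ∂μ' := by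
        apply lintegral_lintegral_swap
        exact (measurable_one.indicator hUmeas).aemeasurable
    _ ≤ ∫⁻ q, F q ∂μ' := lintegral_mono hfiber
    _ ≤ μG (A * B) := partB
end

section
/- For a positive integer N and k ∈ {1,…,N}, let M_k = [[0,1],[1,2^k]] ∈ GL₂(ℤ), let 𝓜 = {M_1,…,M_N, M_1⁻¹,…,M_N⁻¹} and 𝓘 = {I} (the identity matrix). Then the product set (𝓘 ∪ 𝓜)² = {XY : X, Y ∈ 𝓘 ∪ 𝓜} has exactly 4N² + 1 elements. -/
/-!
Write `M_s = [[0,1],[1,s]]`. The products of two letters `M_s^{±1}` are explicit: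
`M_s M_t = [[1,t],[s,1+st]]`, `M_s⁻¹ M_t⁻¹ = [[1+st,-s],[-t,1]]`, and the mixed products are the
unipotent matrices `[[1,0],[s-t,1]]` and `[[1,t-s],[0,1]]`. For positive `s, t` the diagonal
separates the letters, the two kinds of pure products and the unipotent ones, and the off-diagonal
entries recover the letters. Mixed products only collapse on the diagonal `s = t`, to `I`, because
the exponents `2^k` form a Sidon set: `2^a - 2^b` determines `(a, b)` when `a ≠ b`. This leaves
`N + N + N² + N² + (2(N² - N) + 1) = 4N² + 1` elements.
-/

open Finset Pointwise Matrix

namespace Finset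

theorem insert_one_mul_insert_one {α : Type*} [Monoid α] [DecidableEq α] (s : Finset α) :
    insert 1 s * insert 1 s = insert 1 (s ∪ s * s) := by
  simp only [insert_eq, union_mul, mul_union, singleton_one, one_mul, mul_one]
  ext
  simp only [mem_union]
  tauto

theorem image_mul_image {α β : Type*} [DecidableEq β] [Mul β] (s t : Finset α) (f g : α → β) :
    s.image f * t.image g = (s ×ˢ t).image fun p => f p.1 * g p.2 :=
  (image₂_image_left _ _).trans (image₂_image_right _ _)

theorem insert_one_image_product_self {α β : Type*} [DecidableEq α] [DecidableEq β] [One β]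
    (s : Finset α) (f : α × α → β) (hf : ∀ a : α, f (a, a) = 1) :
    insert 1 ((s ×ˢ s).image f) = insert 1 (s.offDiag.image f) := by
  rw [← diag_union_offDiag, image_union]
  refine Subset.antisymm (insert_subset (mem_insert_self _ _) (union_subset ?_ (subset_insert _ _)))
    (insert_subset_insert _ subset_union_right)
  intro x hx
  obtain ⟨⟨a, b⟩, hab, rfl⟩ := mem_image.1 hx
  obtain rfl : a = b := (mem_diag.1 hab).2
  rw [hf]
  exact mem_insert_self _ _

end Finset

/-- The usual condition `a + b = c + d → {a, b} = {c, d}`, phrased as: distinct pairs of distinct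
elements have distinct differences. -/
def IsSidon (S : Finset ℤ) : Prop :=
  Set.InjOn (fun p : ℤ × ℤ => p.1 - p.2) S.offDiag

lemma two_pow_le_two_pow_succ_sub {m b : ℕ} (h : b ≤ m) :
    (2 : ℤ) ^ m ≤ 2 ^ (m + 1) - 2 ^ b := by
  have : (2 : ℤ) ^ b ≤ 2 ^ m := pow_le_pow_right₀ one_le_two h
  rw [pow_succ]
  linarith

lemma eq_of_two_pow_sub_two_pow_eq {a b c d : ℕ} (hab : a ≠ b)
    (h : (2 : ℤ) ^ a - 2 ^ b = 2 ^ c - 2 ^ d) : a = c ∧ b = d := by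
  wlog hba : b < a generalizing a b c d
  · have := this hab.symm (c := d) (d := c) (by linarith) (by omega)
    exact ⟨this.2, this.1⟩
  have hdc : d < c := by
    have : (2 : ℤ) ^ b < 2 ^ a := pow_lt_pow_right₀ one_lt_two hba
    exact (pow_lt_pow_iff_right₀ (one_lt_two : (1 : ℤ) < 2)).1 (by linarith)
  obtain ⟨m, rfl⟩ : ∃ m, a = m + 1 := ⟨a - 1, by omega⟩
  obtain ⟨n, rfl⟩ : ∃ n, c = n + 1 := ⟨c - 1, by omega⟩
  -- `2 ^ m ≤ 2 ^ (m + 1) - 2 ^ b < 2 ^ (m + 1)` pins down the leading exponent `m`.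
  have hmn : m = n := by
    have h₁ := two_pow_le_two_pow_succ_sub (Nat.le_of_lt_succ hba)
    have h₂ := two_pow_le_two_pow_succ_sub (Nat.le_of_lt_succ hdc)
    have : (0 : ℤ) < 2 ^ b := by positivity
    have : (0 : ℤ) < 2 ^ d := by positivity
    have : m < n + 1 := (pow_lt_pow_iff_right₀ (one_lt_two : (1 : ℤ) < 2)).1 (by linarith)
    have : n < m + 1 := (pow_lt_pow_iff_right₀ (one_lt_two : (1 : ℤ) < 2)).1 (by linarith)
    omega
  subst hmn
  exact ⟨rfl, pow_right_injective₀ (two_pos : (0 : ℤ) < 2) (by norm_num) (by linarith)⟩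

theorem isSidon_image_two_pow (A : Finset ℕ) : IsSidon (A.image fun k => (2 : ℤ) ^ k) := by
  rintro ⟨_, _⟩ hp ⟨_, _⟩ hq h
  simp only [coe_offDiag, Set.mem_offDiag, coe_image, Set.mem_image] at hp hq
  obtain ⟨⟨a, -, rfl⟩, ⟨b, -, rfl⟩, hab⟩ := hp
  obtain ⟨⟨c, -, rfl⟩, ⟨d, -, rfl⟩, -⟩ := hq
  obtain ⟨rfl, rfl⟩ := eq_of_two_pow_sub_two_pow_eq (by rintro rfl; exact hab rfl) h
  rfl

/-- The paper's `M_k` is `genMat (2 ^ k)`. -/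
def genMat (s : ℤ) : Matrix (Fin 2) (Fin 2) ℤ := !![0, 1; 1, s]

lemma genMat_inv (s : ℤ) : (genMat s)⁻¹ = !![-s, 1; 1, 0] :=
  inv_eq_right_inv (by simp [genMat, one_fin_two])

lemma genMat_mul_genMat (s t : ℤ) : genMat s * genMat t = !![1, t; s, 1 + s * t] := by
  simp [genMat]

lemma genMat_mul_genMat_inv (s t : ℤ) : genMat s * (genMat t)⁻¹ = !![1, 0; s - t, 1] := by
  rw [genMat_inv]
  simp [genMat, sub_eq_neg_add]

lemma genMat_inv_mul_genMat (s t : ℤ) : (genMat s)⁻¹ * genMat t = !![1, t - s; 0, 1] := by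
  rw [genMat_inv]
  simp [genMat, sub_eq_add_neg, add_comm]

lemma genMat_inv_mul_genMat_inv (s t : ℤ) :
    (genMat s)⁻¹ * (genMat t)⁻¹ = !![1 + s * t, -s; -t, 1] := by
  rw [genMat_inv, genMat_inv]
  simp [add_comm]

lemma genMat_injective : Function.Injective genMat := fun s t h => by
  simpa [genMat] using congrFun (congrFun h 1) 1

lemma genMat_inv_injective : Function.Injective fun s => (genMat s)⁻¹ := fun s t h => by
  simpa [genMat_inv] using congrFun (congrFun h 0) 0

noncomputable def genSet (S : Finset ℤ) : Finset (Matrix (Fin 2) (Fin 2) ℤ) :=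
  S.image genMat ∪ S.image fun s => (genMat s)⁻¹

section

variable {S : Finset ℤ}

lemma card_image_genMat_mul_self :
    (S.image genMat * S.image genMat).card = S.card * S.card := by
  rw [image_mul_image, card_image_of_injective, card_product]
  intro p q h
  simpa [genMat_mul_genMat, Prod.ext_iff] using congrArg (fun X => (X 1 0, X 0 1)) h

lemma card_image_genMat_inv_mul_self :
    ((S.image fun s => (genMat s)⁻¹) * S.image fun s => (genMat s)⁻¹).card =
      S.card * S.card := by
  rw [image_mul_image, card_image_of_injective, card_product]
  intro p q h
  simpa [genMat_inv_mul_genMat_inv, Prod.ext_iff] using congrArg (fun X => (X 0 1, X 1 0)) h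

lemma card_insert_one_mixed_products (hS : IsSidon S) :
    (insert 1 (S.image genMat * (S.image fun s => (genMat s)⁻¹) ∪
      (S.image fun s => (genMat s)⁻¹) * S.image genMat)).card =
      2 * (S.card * S.card - S.card) + 1 := by
  have lower_inj : ∀ {x y : ℤ}, !![1, 0; x, 1] = !![1, 0; y, 1] → x = y := fun h => by
    simpa using congrFun (congrFun h 1) 0
  have upper_inj : ∀ {x y : ℤ}, !![1, x; 0, 1] = !![1, y; 0, 1] → x = y := fun h => by
    simpa using congrFun (congrFun h 0) 1
  rw [image_mul_image, image_mul_image, insert_union_distrib,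
    insert_one_image_product_self _ _ fun a => by simp [genMat_mul_genMat_inv, one_fin_two],
    insert_one_image_product_self _ _ fun a => by simp [genMat_inv_mul_genMat, one_fin_two],
    ← insert_union_distrib, card_insert_of_notMem, card_union_of_disjoint,
    card_image_of_injOn, card_image_of_injOn, offDiag_card]
  · ring
  · intro p hp q hq h
    simp only [genMat_inv_mul_genMat] at h
    exact Prod.swap_injective (hS (by simpa [and_left_comm, eq_comm] using hp)
      (by simpa [and_left_comm, eq_comm] using hq) (upper_inj h))
  · intro p hp q hq h
    simp only [genMat_mul_genMat_inv] at h
    exact hS hp hq (lower_inj h)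
  · simp only [disjoint_left, mem_image, mem_offDiag]
    rintro _ ⟨p, ⟨-, -, hp⟩, rfl⟩ ⟨q, -, h⟩
    have := congrFun (congrFun h 1) 0
    simp only [genMat_mul_genMat_inv, genMat_inv_mul_genMat] at this
    simp [eq_comm, sub_eq_zero, hp] at this
  · simp only [mem_union, mem_image, mem_offDiag, not_or, not_exists, not_and]
    constructor
    · rintro p ⟨-, -, hp⟩ h
      rw [genMat_mul_genMat_inv, one_fin_two] at h
      exact hp (sub_eq_zero.1 (lower_inj h))
    · rintro p ⟨-, -, hp⟩ h
      rw [genMat_inv_mul_genMat, one_fin_two] at h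
      exact hp (sub_eq_zero.1 (upper_inj h)).symm

theorem card_insert_one_genSet_mul_self (hpos : ∀ s ∈ S, 0 < s) (hS : IsSidon S) :
    (insert 1 (genSet S) * insert 1 (genSet S)).card = 4 * S.card ^ 2 + 1 := by
  set F := S.image genMat
  set G := S.image fun s => (genMat s)⁻¹
  set U := insert 1 (F * G ∪ G * F)
  have hF : ∀ X ∈ F, X 0 0 = 0 := by
    simp [F, genMat]
  have hG : ∀ X ∈ G, X 0 0 < 0 := by
    simpa [G, genMat_inv] using hpos
  have hFF : ∀ X ∈ F * F, X 0 0 = 1 ∧ 1 < X 1 1 := by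
    simp only [F, image_mul_image, forall_mem_image, mem_product, genMat_mul_genMat]
    rintro ⟨s, t⟩ ⟨hs, ht⟩
    simpa using mul_pos (hpos s hs) (hpos t ht)
  have hGG : ∀ X ∈ G * G, 1 < X 0 0 := by
    simp only [G, image_mul_image, forall_mem_image, mem_product, genMat_inv_mul_genMat_inv]
    rintro ⟨s, t⟩ ⟨hs, ht⟩
    simpa using mul_pos (hpos s hs) (hpos t ht)
  have hU : ∀ X ∈ U, X 0 0 = 1 ∧ X 1 1 = 1 := by
    simp only [U, F, G, forall_mem_insert, forall_mem_union, image_mul_image, forall_mem_image,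
      genMat_mul_genMat_inv, genMat_inv_mul_genMat]
    simp
  have hsplit : insert 1 (genSet S) * insert 1 (genSet S) = F ∪ (G ∪ (G * G ∪ (F * F ∪ U))) := by
    rw [insert_one_mul_insert_one, genSet, union_mul, mul_union, mul_union]
    ext X
    simp only [U, mem_union, mem_insert]
    tauto
  rw [hsplit, card_union_of_disjoint, card_union_of_disjoint, card_union_of_disjoint,
    card_union_of_disjoint, card_insert_one_mixed_products hS, card_image_genMat_mul_self,
    card_image_genMat_inv_mul_self, card_image_of_injective _ genMat_injective,
    card_image_of_injective _ genMat_inv_injective]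
  · have := Nat.le_mul_self S.card
    rw [sq]
    omega
  all_goals exact disjoint_left.2 (by grind)

end

theorem product_set_card_matrices_general (N : ℕ)
    (M : ℕ → Matrix (Fin 2) (Fin 2) ℤ)
    (hM : ∀ k, M k = !![0, 1; 1, 2 ^ k])
    (ℳ : Finset (Matrix (Fin 2) (Fin 2) ℤ))
    (hℳ : ℳ = (Finset.Icc 1 N).image M ∪ (Finset.Icc 1 N).image (fun k => (M k)⁻¹))
    (ℐ : Finset (Matrix (Fin 2) (Fin 2) ℤ))
    (hℐ : ℐ = {(1 : Matrix (Fin 2) (Fin 2) ℤ)}) :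
    ((ℐ ∪ ℳ) * (ℐ ∪ ℳ)).card = 4 * N ^ 2 + 1 := by
  set S := (Icc 1 N).image fun k => (2 : ℤ) ^ k
  obtain rfl : M = genMat ∘ fun k => (2 : ℤ) ^ k := funext hM
  have hℳS : ℳ = genSet S := by rw [hℳ, genSet, image_image, image_image]; rfl
  have hS : S.card = N := by
    rw [card_image_of_injective _ (pow_right_injective₀ two_pos (by norm_num)), Nat.card_Icc,
      Nat.add_sub_cancel]
  rw [hℐ, ← insert_eq, hℳS, card_insert_one_genSet_mul_self
    (forall_mem_image.2 fun k _ => by positivity) (isSidon_image_two_pow _), hS]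

/-- For `M_k = [[0,1],[1,2^k]]` and `𝓜 = {M_1,…,M_N, M_1⁻¹,…,M_N⁻¹}`, `𝓘 = {I}`, the product
set `(𝓘 ∪ 𝓜)²` has exactly `4N² + 1` elements. -/
theorem product_set_card_matrices (N : ℕ) (hN : 0 < N)
    (M : ℕ → Matrix (Fin 2) (Fin 2) ℤ)
    (hM : ∀ k, M k = !![0, 1; 1, 2 ^ k])
    (ℳ : Finset (Matrix (Fin 2) (Fin 2) ℤ))
    (hℳ : ℳ = (Finset.Icc 1 N).image M ∪ (Finset.Icc 1 N).image (fun k => (M k)⁻¹))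
    (ℐ : Finset (Matrix (Fin 2) (Fin 2) ℤ))
    (hℐ : ℐ = {(1 : Matrix (Fin 2) (Fin 2) ℤ)}) :
    ((ℐ ∪ ℳ) * (ℐ ∪ ℳ)).card = 4 * N ^ 2 + 1 :=
  product_set_card_matrices_general N M hM ℳ hℳ ℐ hℐ
end

section
/- Let C ⊆ ℝ/ℤ be the image of the standard middle-thirds Cantor set under the quotient map ℝ → ℝ/ℤ. Then C is compact, has Haar measure zero, satisfies C = −C, and C + C = ℝ/ℤ. -/
open MeasureTheory Pointwise

lemma preCantorSet_subset_Icc : ∀ n, preCantorSet n ⊆ Set.Icc 0 1 := by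
  intro n
  induction n with
  | zero => simp
  | succ n ih =>
    rintro x (⟨a, ha, rfl⟩ | ⟨a, ha, rfl⟩) <;>
      obtain ⟨h0, h1⟩ := ih ha <;> constructor <;> dsimp <;> linarith

lemma preCantorSet_succ_subset : ∀ n, preCantorSet (n+1) ⊆ preCantorSet n := by
  intro n
  induction n with
  | zero => exact preCantorSet_subset_Icc 1
  | succ n ih =>
    rw [preCantorSet_succ (n+1), preCantorSet_succ n]
    exact Set.union_subset_union (Set.image_mono ih) (Set.image_mono ih)

lemma isCompact_preCantorSet (n : ℕ) : IsCompact (preCantorSet n) :=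
  isCompact_Icc.of_isClosed_subset (isClosed_preCantorSet n) (preCantorSet_subset_Icc n)

lemma one_sub_mem_preCantorSet : ∀ n, ∀ x ∈ preCantorSet n, 1 - x ∈ preCantorSet n := by
  intro n
  induction n with
  | zero => rintro x ⟨h0, h1⟩; exact ⟨by linarith, by linarith⟩
  | succ n ih =>
    rintro x (⟨a, ha, rfl⟩ | ⟨a, ha, rfl⟩)
    · exact Or.inr ⟨1 - a, ih a ha, by ring⟩
    · exact Or.inl ⟨1 - a, ih a ha, by ring⟩

lemma one_sub_mem_cantorSet {x : ℝ} (hx : x ∈ cantorSet) : 1 - x ∈ cantorSet :=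
  Set.mem_iInter.mpr fun n => one_sub_mem_preCantorSet n x (Set.mem_iInter.mp hx n)

lemma volume_preCantorSet_le (n : ℕ) : volume (preCantorSet n) ≤ (2/3 : ENNReal) ^ n := by
  induction n with
  | zero => simp [Real.volume_Icc]
  | succ n ih =>
    have h1 : (· / 3) '' preCantorSet n = (3⁻¹ : ℝ) • preCantorSet n := by
      ext x
      simp only [Set.mem_image, Set.mem_smul_set, smul_eq_mul]
      constructor
      · rintro ⟨a, ha, rfl⟩; exact ⟨a, ha, by ring⟩
      · rintro ⟨a, ha, rfl⟩; exact ⟨a, ha, by ring⟩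
    have h2 : (fun x => (2 + x) / 3) '' preCantorSet n
        = (3⁻¹ : ℝ) • ((2 : ℝ) +ᵥ preCantorSet n) := by
      ext x
      simp only [Set.mem_image, Set.mem_smul_set, Set.mem_vadd_set, smul_eq_mul]
      constructor
      · rintro ⟨a, ha, rfl⟩; exact ⟨2 + a, ⟨a, ha, rfl⟩, by ring⟩
      · rintro ⟨b, ⟨a, ha, rfl⟩, rfl⟩; exact ⟨a, ha, by simp [vadd_eq_add]; ring⟩
    have key : ∀ s : Set ℝ, volume ((3⁻¹ : ℝ) • s) = ENNReal.ofReal 3⁻¹ * volume s := by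
      intro s
      rw [Measure.addHaar_smul]
      norm_num [abs_of_nonneg]
    rw [preCantorSet_succ]
    calc volume ((· / 3) '' preCantorSet n ∪ (fun x => (2 + x) / 3) '' preCantorSet n)
        ≤ volume ((· / 3) '' preCantorSet n) + volume ((fun x => (2 + x) / 3) '' preCantorSet n) :=
          measure_union_le _ _
      _ = ENNReal.ofReal 3⁻¹ * volume (preCantorSet n)
            + ENNReal.ofReal 3⁻¹ * volume (preCantorSet n) := by
          rw [h1, h2, key, key, measure_vadd]
      _ ≤ ENNReal.ofReal 3⁻¹ * (2/3)^n + ENNReal.ofReal 3⁻¹ * (2/3)^n := by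
          gcongr
      _ = (2/3 : ENNReal) ^ (n + 1) := by
          rw [← two_mul, pow_succ]
          have : ENNReal.ofReal 3⁻¹ = (3 : ENNReal)⁻¹ := by
            rw [ENNReal.ofReal_inv_of_pos (by norm_num)]
            norm_num
          rw [this]
          rw [ENNReal.div_eq_inv_mul]
          ring

lemma volume_cantorSet : volume cantorSet = 0 := by
  have h : ∀ n, volume cantorSet ≤ (2/3 : ENNReal) ^ n := fun n =>
    le_trans (measure_mono (Set.iInter_subset _ n)) (volume_preCantorSet_le n)
  have ht : Filter.Tendsto (fun n => (2/3 : ENNReal) ^ n) Filter.atTop (nhds 0) :=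
    ENNReal.tendsto_pow_atTop_nhds_zero_of_lt_one
      (by rw [ENNReal.div_lt_iff] <;> norm_num)
  exact le_antisymm (ge_of_tendsto' ht h) zero_le

lemma Icc_subset_preCantorSet_add (n : ℕ) :
    Set.Icc (0:ℝ) 2 ⊆ preCantorSet n + preCantorSet n := by
  induction n with
  | zero =>
    rintro y ⟨h0, h2⟩
    rcases le_total y 1 with h | h
    · exact ⟨y, ⟨h0, h⟩, 0, ⟨le_refl 0, zero_le_one⟩, by ring⟩
    · exact ⟨1, ⟨zero_le_one, le_refl 1⟩, y - 1, ⟨by linarith, by linarith⟩, by ring⟩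
  | succ n ih =>
    rintro y ⟨h0, h2⟩
    rcases le_total y (2/3) with h | h
    · obtain ⟨a, ha, b, hb, hab⟩ := ih (Set.mem_Icc.mpr ⟨by linarith, by linarith⟩ :
        3 * y ∈ Set.Icc (0:ℝ) 2)
      refine Set.mem_add.mpr ⟨a/3, Or.inl ⟨a, ha, rfl⟩, b/3, Or.inl ⟨b, hb, rfl⟩, ?_⟩
      simp only at hab ⊢; linarith
    · rcases le_total y (4/3) with h' | h'
      · obtain ⟨a, ha, b, hb, hab⟩ := ih (Set.mem_Icc.mpr ⟨by linarith, by linarith⟩ :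
          3 * y - 2 ∈ Set.Icc (0:ℝ) 2)
        refine Set.mem_add.mpr ⟨a/3, Or.inl ⟨a, ha, rfl⟩, (2 + b)/3, Or.inr ⟨b, hb, rfl⟩, ?_⟩
        simp only at hab ⊢; linarith
      · obtain ⟨a, ha, b, hb, hab⟩ := ih (Set.mem_Icc.mpr ⟨by linarith, by linarith⟩ :
          3 * y - 4 ∈ Set.Icc (0:ℝ) 2)
        refine Set.mem_add.mpr ⟨(2 + a)/3, Or.inr ⟨a, ha, rfl⟩, (2 + b)/3, Or.inr ⟨b, hb, rfl⟩, ?_⟩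
        simp only at hab ⊢; linarith

lemma Icc_subset_cantorSet_add : Set.Icc (0:ℝ) 2 ⊆ cantorSet + cantorSet := by
  intro y hy
  set K : ℕ → Set (ℝ × ℝ) :=
    fun n => (preCantorSet n ×ˢ preCantorSet n) ∩ {p : ℝ × ℝ | p.1 + p.2 = y} with hKdef
  have hne : ∀ n, (K n).Nonempty := by
    intro n
    obtain ⟨a, ha, b, hb, hab⟩ := Icc_subset_preCantorSet_add n hy
    exact ⟨(a, b), ⟨ha, hb⟩, hab⟩
  have hcl : ∀ n, IsClosed (K n) := fun n =>
    (((isClosed_preCantorSet n).prod (isClosed_preCantorSet n)).inter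
      (isClosed_eq (continuous_fst.add continuous_snd) continuous_const))
  have hcp : ∀ n, IsCompact (K n) := fun n =>
    ((isCompact_preCantorSet n).prod (isCompact_preCantorSet n)).inter_right
      (isClosed_eq (continuous_fst.add continuous_snd) continuous_const)
  have hdec : ∀ n, K (n+1) ⊆ K n := fun n =>
    Set.inter_subset_inter_left _
      (Set.prod_mono (preCantorSet_succ_subset n) (preCantorSet_succ_subset n))
  obtain ⟨⟨a, b⟩, hp⟩ := IsCompact.nonempty_iInter_of_sequence_nonempty_isCompact_isClosed
    K hdec hne (hcp 0) hcl
  simp only [Set.mem_iInter, hKdef, Set.mem_inter_iff, Set.mem_prod, Set.mem_setOf_eq] at hp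
  exact ⟨a, Set.mem_iInter.mpr fun n => (hp n).1.1, b,
    Set.mem_iInter.mpr fun n => (hp n).1.2, (hp 0).2⟩

/-- The image `C` of the middle-thirds Cantor set in the circle `ℝ/ℤ` is compact, has Haar
measure zero, is symmetric (`C = −C`), and satisfies `C + C = ℝ/ℤ`. -/
theorem cantor_set_in_circle :
    letI C : Set (AddCircle (1 : ℝ)) := (fun x : ℝ => (x : AddCircle (1 : ℝ))) '' cantorSet
    IsCompact C ∧ volume C = 0 ∧ C = -C ∧ C + C = Set.univ := by
  have hcont : Continuous (fun x : ℝ => (x : AddCircle (1:ℝ))) := continuous_quotient_mk'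
  have hcomp : IsCompact ((fun x : ℝ => (x : AddCircle (1:ℝ))) '' cantorSet) :=
    isCompact_cantorSet.image hcont
  have hmeas : MeasurableSet ((fun x : ℝ => (x : AddCircle (1:ℝ))) '' cantorSet) :=
    hcomp.isClosed.measurableSet
  have hsub : ((fun x : ℝ => (x : AddCircle (1:ℝ))) '' cantorSet) ⊆
      -((fun x : ℝ => (x : AddCircle (1:ℝ))) '' cantorSet) := by
    rintro z ⟨c, hc, rfl⟩
    rw [Set.mem_neg]
    refine ⟨1 - c, one_sub_mem_cantorSet hc, ?_⟩
    show ((1 - c : ℝ) : AddCircle (1:ℝ)) = -((c : ℝ) : AddCircle (1:ℝ))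
    rw [show (1 - c : ℝ) = 1 + (-c) by ring, AddCircle.coe_add 1, AddCircle.coe_period,
      zero_add]
    exact QuotientAddGroup.mk_neg (AddSubgroup.zmultiples (1:ℝ)) c
  refine ⟨hcomp, ?_, ?_, ?_⟩
  · -- measure zero
    rw [AddCircle.add_projection_respects_measure (T := 1) 0 hmeas]
    refine measure_mono_null ?_
      (measure_union_null volume_cantorSet (measure_singleton (1:ℝ)))
    rintro x ⟨⟨c, hc, hcx⟩, hx0, hx1⟩
    have hk : ∃ k : ℤ, x = c + k := by
      rw [QuotientAddGroup.eq] at hcx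
      obtain ⟨k, hk⟩ := hcx
      exact ⟨k, by simp [zsmul_eq_mul] at hk; linarith⟩
    obtain ⟨k, hkx⟩ := hk
    obtain ⟨hc0, hc1⟩ := cantorSet_subset_unitInterval hc
    rw [zero_add] at hx1
    have hklb : (-1 : ℝ) < (k : ℝ) := by rw [hkx] at hx0; linarith
    have hkub : (k : ℝ) ≤ 1 := by rw [hkx] at hx1; linarith
    have hklb' : (-1 : ℤ) < k := by exact_mod_cast hklb
    have hkub' : k ≤ 1 := by exact_mod_cast hkub
    interval_cases k
    · exact Or.inl (by rw [hkx]; simpa using hc)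
    · have hc0' : c = 0 := by
        rw [hkx] at hx1
        push_cast at hx1
        linarith
      exact Or.inr (by rw [hkx, hc0']; norm_num)
  · -- symmetry
    refine Set.Subset.antisymm hsub fun z hz => ?_
    have := hsub (Set.mem_neg.mp hz)
    rwa [Set.mem_neg, neg_neg] at this
  · -- sum
    refine Set.eq_univ_of_forall fun z => ?_
    induction z using QuotientAddGroup.induction_on with
    | H y =>
      have hw : ((Int.fract y : ℝ) : AddCircle (1:ℝ)) = y := by
        rw [QuotientAddGroup.eq]
        refine ⟨⌊y⌋, ?_⟩
        show ⌊y⌋ • (1:ℝ) = -Int.fract y + y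
        rw [zsmul_eq_mul, mul_one, neg_add_eq_sub, Int.self_sub_fract]
      obtain ⟨a, ha, b, hb, hab⟩ := Icc_subset_cantorSet_add
        (Set.mem_Icc.mpr ⟨Int.fract_nonneg y, by linarith [Int.fract_lt_one y]⟩ :
          Int.fract y ∈ Set.Icc (0:ℝ) 2)
      have : ((y : AddCircle (1:ℝ))) = (a : AddCircle (1:ℝ)) + (b : AddCircle (1:ℝ)) := by
        rw [← AddCircle.coe_add 1, ← hw]
        simp only at hab
        rw [hab]
      rw [this]
      exact Set.add_mem_add ⟨a, ha, rfl⟩ ⟨b, hb, rfl⟩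
end
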